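/- arXiv:2204.05150 — 2 statements merged into one kernel-verified Lean document; each statement's English description precedes it below -/
import Mathlib

section
/- Let H be a nonzero complex Hilbert space and let B, C be bounded linear operators on H. Then w(|B| + i|C|)² ≤ ‖B*B + C*C‖, where ‖·‖ denotes the operator norm. -/
/-!
For self-adjoint `S`, `T` the numbers `⟪S x, x⟫` and `⟪T x, x⟫` are real, so
`|⟪(S + iT) x, x⟫|² = ⟪S x, x⟫² + ⟪T x, x⟫²`. By Cauchy–Schwarz, for a unit vector `x`,
`⟪S x, x⟫² ≤ ‖S x‖² = ⟪S†S x, x⟫`, and likewise for `T`, so the sum is at most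
`⟪(S†S + T†T) x, x⟫ ≤ ‖S†S + T†T‖`.
With `S = |B|`, `T = |C|` we have `S†S = B†B` and `T†T = C†C`.
-/

open scoped InnerProductSpace
open ContinuousLinearMap

variable {H : Type*} [NormedAddCommGroup H] [InnerProductSpace ℂ H]
  [CompleteSpace H] [Nontrivial H]

/-- The numerical radius of a bounded linear operator. -/
noncomputable def numRad (A : H →L[ℂ] H) : ℝ :=
  ⨆ x : {x : H // ‖x‖ = 1}, ‖⟪A x.1, x.1⟫_ℂ‖

/-- The Crawford number of a bounded linear operator. -/
noncomputable def crawford (A : H →L[ℂ] H) : ℝ :=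
  ⨅ x : {x : H // ‖x‖ = 1}, ‖⟪A x.1, x.1⟫_ℂ‖

/-- The Euclidean operator radius of a pair of bounded linear operators. -/
noncomputable def euclRad (B C : H →L[ℂ] H) : ℝ :=
  ⨆ x : {x : H // ‖x‖ = 1}, Real.sqrt (‖⟪B x.1, x.1⟫_ℂ‖ ^ 2 + ‖⟪C x.1, x.1⟫_ℂ‖ ^ 2)

/-- The absolute value `|A| = (A*A)^(1/2)` of a bounded linear operator. -/
noncomputable def opAbs (A : H →L[ℂ] H) : H →L[ℂ] H := CFC.sqrt (adjoint A * A)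

/-- The real part `Re(A) = (A + A*)/2` of a bounded linear operator. -/
noncomputable def reOp (A : H →L[ℂ] H) : H →L[ℂ] H := (2 : ℂ)⁻¹ • (A + adjoint A)

/-- The imaginary part `Im(A) = (A - A*)/(2i)` of a bounded linear operator. -/
noncomputable def imOp (A : H →L[ℂ] H) : H →L[ℂ] H := (2 * Complex.I)⁻¹ • (A - adjoint A)

section InnerProductSpace

variable {𝕜 E : Type*} [RCLike 𝕜] [NormedAddCommGroup E] [InnerProductSpace 𝕜 E]

theorem ContinuousLinearMap.re_inner_apply_self_le_opNorm (A : E →L[𝕜] E) (x : E) :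
    RCLike.re ⟪A x, x⟫_𝕜 ≤ ‖A‖ * ‖x‖ ^ 2 :=
  calc RCLike.re ⟪A x, x⟫_𝕜 ≤ ‖A x‖ * ‖x‖ := re_inner_le_norm _ _
    _ ≤ ‖A‖ * ‖x‖ * ‖x‖ := by gcongr; exact A.le_opNorm x
    _ = ‖A‖ * ‖x‖ ^ 2 := by ring

variable [CompleteSpace E]

theorem ContinuousLinearMap.norm_inner_apply_self_sq_le (A : E →L[𝕜] E) (x : E) :
    ‖⟪A x, x⟫_𝕜‖ ^ 2 ≤ RCLike.re ⟪(adjoint A * A) x, x⟫_𝕜 * ‖x‖ ^ 2 :=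
  calc ‖⟪A x, x⟫_𝕜‖ ^ 2 ≤ (‖A x‖ * ‖x‖) ^ 2 := by gcongr; exact norm_inner_le_norm _ _
    _ = RCLike.re ⟪(adjoint A * A) x, x⟫_𝕜 * ‖x‖ ^ 2 := by
      rw [mul_pow, apply_norm_sq_eq_inner_adjoint_left]; rfl

end InnerProductSpace

section Complex

variable {E : Type*} [NormedAddCommGroup E] [InnerProductSpace ℂ E]

theorem numRad_sq_le {A : E →L[ℂ] E} {M : ℝ} (hM : 0 ≤ M)
    (h : ∀ x : E, ‖x‖ = 1 → ‖⟪A x, x⟫_ℂ‖ ^ 2 ≤ M) : numRad A ^ 2 ≤ M := by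
  have hle : numRad A ≤ √M :=
    Real.iSup_le (fun x => Real.le_sqrt_of_sq_le (h x.1 x.2)) (Real.sqrt_nonneg M)
  have hnonneg : 0 ≤ numRad A := Real.iSup_nonneg fun _ => norm_nonneg _
  calc numRad A ^ 2 ≤ √M ^ 2 := by gcongr
    _ = M := Real.sq_sqrt hM

variable [CompleteSpace E]

theorem IsSelfAdjoint.norm_inner_add_I_smul_apply_self_sq {S T : E →L[ℂ] E}
    (hS : IsSelfAdjoint S) (hT : IsSelfAdjoint T) (x : E) :
    ‖⟪(S + Complex.I • T) x, x⟫_ℂ‖ ^ 2 = ‖⟪S x, x⟫_ℂ‖ ^ 2 + ‖⟪T x, x⟫_ℂ‖ ^ 2 := by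
  have hSx : (RCLike.re ⟪S x, x⟫_ℂ : ℂ) = ⟪S x, x⟫_ℂ :=
    hS.isSymmetric.coe_re_inner_apply_self x
  have hTx : (RCLike.re ⟪T x, x⟫_ℂ : ℂ) = ⟪T x, x⟫_ℂ :=
    hT.isSymmetric.coe_re_inner_apply_self x
  rw [add_apply, smul_apply, inner_add_left, inner_smul_left, ← hSx, ← hTx]
  simp only [Complex.conj_I, Complex.sq_norm, Complex.normSq_apply, Complex.add_re,
    Complex.add_im, Complex.mul_re, Complex.mul_im, Complex.neg_re, Complex.neg_im,
    Complex.I_re, Complex.I_im, Complex.ofReal_re, Complex.ofReal_im]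
  ring

theorem IsSelfAdjoint.norm_inner_add_I_smul_apply_self_sq_le {S T : E →L[ℂ] E}
    (hS : IsSelfAdjoint S) (hT : IsSelfAdjoint T) {x : E} (hx : ‖x‖ = 1) :
    ‖⟪(S + Complex.I • T) x, x⟫_ℂ‖ ^ 2 ≤ ‖adjoint S * S + adjoint T * T‖ := by
  have hS' := S.norm_inner_apply_self_sq_le x
  have hT' := T.norm_inner_apply_self_sq_le x
  have hST := (adjoint S * S + adjoint T * T).re_inner_apply_self_le_opNorm x
  rw [hx, one_pow, mul_one] at hS' hT' hST
  rw [add_apply, inner_add_left, map_add] at hST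
  rw [hS.norm_inner_add_I_smul_apply_self_sq hT]
  linarith

theorem isSelfAdjoint_opAbs (A : E →L[ℂ] E) : IsSelfAdjoint (opAbs A) :=
  (CFC.sqrt_nonneg _).isSelfAdjoint

theorem adjoint_opAbs_mul_opAbs (A : E →L[ℂ] E) :
    adjoint (opAbs A) * opAbs A = adjoint A * A := by
  rw [← star_eq_adjoint, (isSelfAdjoint_opAbs A).star_eq]
  exact CFC.sqrt_mul_sqrt_self _ (by simpa [star_eq_adjoint] using star_mul_self_nonneg A)

end Complex

theorem stmt2 (B C : H →L[ℂ] H) :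
    (numRad (opAbs B + Complex.I • opAbs C)) ^ 2 ≤
      ‖adjoint B * B + adjoint C * C‖ := by
  refine numRad_sq_le (norm_nonneg _) fun x hx => ?_
  have h := (isSelfAdjoint_opAbs B).norm_inner_add_I_smul_apply_self_sq_le
    (isSelfAdjoint_opAbs C) hx
  rwa [adjoint_opAbs_mul_opAbs, adjoint_opAbs_mul_opAbs] at h
end

section
/- Let H be a nonzero complex Hilbert space and let B, C be bounded linear operators on H. Then w_e(B, C)² ≤ min{ w(B + C)², w(B − C)² } + (1/2)·‖C*C + BB*‖ + w(BC). -/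
/-!
Fix a unit vector `x` and put `a = ⟪B x, x⟫`, `c = ⟪C x, x⟫`. Then
`|a|² + |c|² = (|a| - |c|)² + 2|a||c|`, and `(|a| - |c|)² ≤ |a ± c|² ≤ w(B ± C)²`.
The product is controlled by Buzano's inequality applied to `C x`, `B* x` and the unit vector `x`:
`2|a||c| ≤ ‖C x‖‖B* x‖ + |⟪B C x, x⟫|`, and `2‖C x‖‖B* x‖ ≤ ‖C x‖² + ‖B* x‖² = re ⟪(C* C + B B*) x, x⟫`.
-/

open scoped InnerProductSpace
open ContinuousLinearMap

variable {H : Type*} [NormedAddCommGroup H] [InnerProductSpace ℂ H]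
  [CompleteSpace H] [Nontrivial H]

section InnerProductSpace

variable {𝕜 E : Type*} [RCLike 𝕜] [NormedAddCommGroup E] [InnerProductSpace 𝕜 E]

local notation "⟪" x ", " y "⟫" => inner 𝕜 x y

/-- Buzano's inequality. Reflection in the line `𝕜 ∙ e` maps `b` to `2 ⟪e, b⟫ e - b` and
preserves its norm. -/
theorem norm_inner_mul_inner_le_of_norm_eq_one {e : E} (he : ‖e‖ = 1) (a b : E) :
    ‖⟪a, e⟫ * ⟪e, b⟫‖ ≤ (‖a‖ * ‖b‖ + ‖⟪a, b⟫‖) / 2 := by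
  set R := (𝕜 ∙ e).reflection
  have hR : 2 • (⟪e, b⟫ • e) = R b + b := by
    rw [Submodule.reflection_apply, Submodule.starProjection_unit_singleton 𝕜 he]
    abel
  have key : 2 * (⟪a, e⟫ * ⟪e, b⟫) = ⟪a, R b⟫ + ⟪a, b⟫ := by
    rw [← inner_add_right, ← hR, inner_smul_right_eq_smul, inner_smul_right]
    simp only [nsmul_eq_mul, Nat.cast_ofNat]
    ring
  have : ‖(2 : 𝕜) * (⟪a, e⟫ * ⟪e, b⟫)‖ ≤ ‖a‖ * ‖b‖ + ‖⟪a, b⟫‖ := by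
    calc _ ≤ ‖⟪a, R b⟫‖ + ‖⟪a, b⟫‖ := key ▸ norm_add_le _ _
      _ ≤ ‖a‖ * ‖R b‖ + ‖⟪a, b⟫‖ := by gcongr; exact norm_inner_le_norm _ _
      _ = ‖a‖ * ‖b‖ + ‖⟪a, b⟫‖ := by rw [R.norm_map]
  rw [norm_mul, RCLike.norm_ofNat] at this
  linarith

theorem norm_inner_apply_self_le_opNorm (T : E →L[𝕜] E) {x : E} (hx : ‖x‖ = 1) :
    ‖⟪T x, x⟫‖ ≤ ‖T‖ :=
  calc ‖⟪T x, x⟫‖ ≤ ‖T x‖ * ‖x‖ := norm_inner_le_norm _ _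
    _ ≤ ‖T‖ := by simpa [hx] using T.le_opNorm x

variable [CompleteSpace E]

theorem norm_sq_apply_add_norm_sq_adjoint_apply_le (B C : E →L[𝕜] E) {x : E} (hx : ‖x‖ = 1) :
    ‖C x‖ ^ 2 + ‖adjoint B x‖ ^ 2 ≤ ‖adjoint C * C + B * adjoint B‖ := by
  have : ‖C x‖ ^ 2 + ‖adjoint B x‖ ^ 2 = RCLike.re ⟪(adjoint C * C + B * adjoint B) x, x⟫ := by
    rw [apply_norm_sq_eq_inner_adjoint_left, apply_norm_sq_eq_inner_adjoint_left, adjoint_adjoint,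
      add_apply, inner_add_left, map_add]
    rfl
  rw [this]
  exact (RCLike.re_le_norm _).trans (norm_inner_apply_self_le_opNorm _ hx)

theorem two_mul_norm_inner_apply_self_mul_le (B C : E →L[𝕜] E) {x : E} (hx : ‖x‖ = 1) :
    2 * (‖⟪B x, x⟫‖ * ‖⟪C x, x⟫‖) ≤
      (1/2) * ‖adjoint C * C + B * adjoint B‖ + ‖⟪(B * C) x, x⟫‖ := by
  have buzano := norm_inner_mul_inner_le_of_norm_eq_one (𝕜 := 𝕜) hx (C x) (adjoint B x)
  rw [adjoint_inner_right, adjoint_inner_right, norm_mul, ← mul_apply_eq_comp] at buzano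
  have := norm_sq_apply_add_norm_sq_adjoint_apply_le B C hx
  nlinarith [sq_nonneg (‖C x‖ - ‖adjoint B x‖)]

end InnerProductSpace

section NumericalRadius

variable {E : Type*} [NormedAddCommGroup E] [InnerProductSpace ℂ E]

theorem norm_inner_apply_self_le_numRad (A : E →L[ℂ] E) {x : E} (hx : ‖x‖ = 1) :
    ‖⟪A x, x⟫_ℂ‖ ≤ numRad A :=
  le_ciSup (f := fun y : {y : E // ‖y‖ = 1} => ‖⟪A y.1, y.1⟫_ℂ‖)
    ⟨‖A‖, by rintro _ ⟨y, rfl⟩; exact norm_inner_apply_self_le_opNorm A y.2⟩ ⟨x, hx⟩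

theorem numRad_nonneg (A : E →L[ℂ] E) : 0 ≤ numRad A :=
  Real.iSup_nonneg fun _ => norm_nonneg _

theorem sq_norm_sub_norm_le_numRad_add_sq (B C : E →L[ℂ] E) {x : E} (hx : ‖x‖ = 1) :
    (‖⟪B x, x⟫_ℂ‖ - ‖⟪C x, x⟫_ℂ‖) ^ 2 ≤ numRad (B + C) ^ 2 := by
  have h : |‖⟪B x, x⟫_ℂ‖ - ‖⟪C x, x⟫_ℂ‖| ≤ numRad (B + C) := by
    calc _ = |‖⟪B x, x⟫_ℂ‖ - ‖-⟪C x, x⟫_ℂ‖| := by rw [norm_neg]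
      _ ≤ ‖⟪B x, x⟫_ℂ - -⟪C x, x⟫_ℂ‖ := abs_norm_sub_norm_le _ _
      _ = ‖⟪(B + C) x, x⟫_ℂ‖ := by rw [sub_neg_eq_add, add_apply, inner_add_left]
      _ ≤ numRad (B + C) := norm_inner_apply_self_le_numRad _ hx
  simpa only [sq_abs] using pow_le_pow_left₀ (abs_nonneg _) h 2

theorem sq_norm_sub_norm_le_numRad_sub_sq (B C : E →L[ℂ] E) {x : E} (hx : ‖x‖ = 1) :
    (‖⟪B x, x⟫_ℂ‖ - ‖⟪C x, x⟫_ℂ‖) ^ 2 ≤ numRad (B - C) ^ 2 := by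
  have h : |‖⟪B x, x⟫_ℂ‖ - ‖⟪C x, x⟫_ℂ‖| ≤ numRad (B - C) := by
    calc _ ≤ ‖⟪B x, x⟫_ℂ - ⟪C x, x⟫_ℂ‖ := abs_norm_sub_norm_le _ _
      _ = ‖⟪(B - C) x, x⟫_ℂ‖ := by rw [sub_apply, inner_sub_left]
      _ ≤ numRad (B - C) := norm_inner_apply_self_le_numRad _ hx
  simpa only [sq_abs] using pow_le_pow_left₀ (abs_nonneg _) h 2

theorem euclRad_sq_le {B C : E →L[ℂ] E} {M : ℝ} (hM : 0 ≤ M)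
    (h : ∀ x : E, ‖x‖ = 1 → ‖⟪B x, x⟫_ℂ‖ ^ 2 + ‖⟪C x, x⟫_ℂ‖ ^ 2 ≤ M) :
    euclRad B C ^ 2 ≤ M := by
  have h0 : 0 ≤ euclRad B C := Real.iSup_nonneg fun _ => Real.sqrt_nonneg _
  refine (Real.le_sqrt h0 hM).1 (Real.iSup_le (fun x => ?_) (Real.sqrt_nonneg _))
  exact Real.sqrt_le_sqrt (h x.1 x.2)

end NumericalRadius

theorem stmt10 (B C : H →L[ℂ] H) :
    (euclRad B C) ^ 2 ≤
      min ((numRad (B + C)) ^ 2) ((numRad (B - C)) ^ 2)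
        + (1/2) * ‖adjoint C * C + B * adjoint B‖ + numRad (B * C) := by
  have hBC := numRad_nonneg (B * C)
  refine euclRad_sq_le (by positivity) fun x hx => ?_
  have hmin := le_min (sq_norm_sub_norm_le_numRad_add_sq B C hx)
    (sq_norm_sub_norm_le_numRad_sub_sq B C hx)
  have hprod := (two_mul_norm_inner_apply_self_mul_le B C hx).trans
    (add_le_add_right (norm_inner_apply_self_le_numRad (B * C) hx) _)
  calc _ = (‖⟪B x, x⟫_ℂ‖ - ‖⟪C x, x⟫_ℂ‖) ^ 2 + 2 * (‖⟪B x, x⟫_ℂ‖ * ‖⟪C x, x⟫_ℂ‖) := by ring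
    _ ≤ _ := by linarith
end
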